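/- arXiv:1711.09423 — 3 statements merged into one kernel-verified Lean document; each statement's English description precedes it below -/
import Mathlib

section
/- Let X be a metric space, p ∈ X and x : Fin n → X. Suppose the point array (p, x₁, …, xₙ) satisfies the monopolar (star) tree comparison: there exist p̃ ∈ H and x̃ : Fin n → H with dist p̃ (x̃ i) = dist p (x i) for every i and dist (x i) (x j) ≤ dist (x̃ i) (x̃ j) for all i, j. Then for every s : Fin n → ℝ with s i ≥ 0 for all i, one has ∑_{i} ∑_{j} s i · s j · ( (dist (x i) p)² + (dist (x j) p)² − (dist (x i) (x j))² ) / 2 ≥ 0. -/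
/-!
Translate the comparison configuration so that `p̃` is the origin. By polarization, the Gram
matrix `⟪x̃ᵢ - p̃, x̃ⱼ - p̃⟫` has entries `½(d(x̃ᵢ,p̃)² + d(x̃ⱼ,p̃)² - d(x̃ᵢ,x̃ⱼ)²)`; these lie
entrywise below the `mᵢⱼ`, because the legs from `p̃` have the original lengths while the
distances `d(x̃ᵢ,x̃ⱼ)` can only be larger. A Gram matrix is positive semidefinite, and pairing
with a nonnegative `s` preserves the entrywise inequality.
-/

open scoped InnerProductSpace

abbrev H : Type := lp (fun _ : ℕ => ℝ) 2

theorem real_inner_sub_sub_eq_dist_sq {E : Type*} [NormedAddCommGroup E] [InnerProductSpace ℝ E]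
    (a b c : E) : ⟪b - a, c - a⟫_ℝ = (dist b a ^ 2 + dist c a ^ 2 - dist b c ^ 2) / 2 := by
  have h := norm_sub_sq_real (b - a) (c - a)
  rw [sub_sub_sub_cancel_right] at h
  rw [dist_eq_norm, dist_eq_norm, dist_eq_norm]
  linarith

theorem sum_sum_mul_real_inner_nonneg {ι E : Type*} [Fintype ι] [NormedAddCommGroup E]
    [InnerProductSpace ℝ E] (s : ι → ℝ) (v : ι → E) :
    0 ≤ ∑ i, ∑ j, s i * s j * ⟪v i, v j⟫_ℝ := by
  have h : ∑ i, ∑ j, s i * s j * ⟪v i, v j⟫_ℝ = ⟪∑ i, s i • v i, ∑ j, s j • v j⟫_ℝ := by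
    rw [sum_inner]
    simp only [inner_sum, real_inner_smul_left, real_inner_smul_right]
    exact Finset.sum_congr rfl fun i _ => Finset.sum_congr rfl fun j _ => by ring
  exact h ▸ real_inner_self_nonneg

/-- If the array `(p, x₁, …, xₙ)` satisfies the monopolar (star) tree comparison, then the
associated Gram-type matrix `m i j = ½(dist(xᵢ,p)² + dist(xⱼ,p)² − dist(xᵢ,xⱼ)²)` satisfies
`s ⬝ M ⬝ sᵀ ≥ 0` for every vector `s` with nonnegative components. -/
theorem monopolar_comparison_matrix_inequality
    {X : Type*} [MetricSpace X] {n : ℕ} (p : X) (x : Fin n → X)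
    (h : ∃ (pt : H) (xt : Fin n → H),
      (∀ i, dist pt (xt i) = dist p (x i)) ∧
      ∀ i j, dist (x i) (x j) ≤ dist (xt i) (xt j))
    (s : Fin n → ℝ) (hs : ∀ i, 0 ≤ s i) :
    0 ≤ ∑ i, ∑ j, s i * s j *
      ((dist (x i) p ^ 2 + dist (x j) p ^ 2 - dist (x i) (x j) ^ 2) / 2) := by
  obtain ⟨pt, xt, hleg, hcomp⟩ := h
  have hentry : ∀ i j, ⟪xt i - pt, xt j - pt⟫_ℝ ≤
      (dist (x i) p ^ 2 + dist (x j) p ^ 2 - dist (x i) (x j) ^ 2) / 2 := by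
    intro i j
    rw [real_inner_sub_sub_eq_dist_sq, dist_comm (xt i), dist_comm (xt j), hleg, hleg,
      dist_comm p, dist_comm p]
    have := pow_le_pow_left₀ dist_nonneg (hcomp i j) 2
    linarith
  calc 0 ≤ ∑ i, ∑ j, s i * s j * ⟪xt i - pt, xt j - pt⟫_ℝ := sum_sum_mul_real_inner_nonneg s _
    _ ≤ _ := Finset.sum_le_sum fun i _ => Finset.sum_le_sum fun j _ =>
        mul_le_mul_of_nonneg_left (hentry i j) (mul_nonneg (hs i) (hs j))
end

section
/- (Kirszbraun rigidity, Euclidean case.) Let E = EuclideanSpace ℝ (Fin m) and let F be a real Hilbert space (a complete real inner product space). Let p ∈ E, x : Fin n → E, q̃ ∈ F and x̃ : Fin n → F be such that: (1) dist p (x i) ≤ dist q̃ (x̃ i) for every i; (2) dist (x̃ i) (x̃ j) ≤ dist (x i) (x j) for all i, j; and (3) q̃ lies in the intrinsic (relative) interior of the convex hull K̃ of {x̃ 1, …, x̃ n}. Then equality holds in all these inequalities: dist q̃ (x̃ i) = dist p (x i) for all i and dist (x̃ i) (x̃ j) = dist (x i) (x j) for all i, j; moreover there is a map f : F → E that is distance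 preserving on K̃ (dist (f y) (f z) = dist y z for all y, z ∈ K̃) with f (x̃ i) = x i for every i and f q̃ = p. -/
/-!
A point of the intrinsic interior of the convex hull of the `x̃ i` is a barycentre
`q̃ = ∑ wᵢ x̃ᵢ` with all weights `wᵢ > 0`. For weights summing to one, every configuration satisfies
`∑ᵢⱼ wᵢ wⱼ |vᵢ - vⱼ|² = 2 ∑ᵢ wᵢ |q - vᵢ|² - 2 |q - ∑ᵢ wᵢ vᵢ|²`. Applied to `x̃` with `q = q̃`,
where the last term vanishes, and to `x` with `q = p`, the hypotheses compare these sums term by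
term in opposite directions, which forces every term to agree and `p = ∑ wᵢ xᵢ`. Equal pairwise distances determine the norm of every combination `∑ δᵢ vᵢ` with
`∑ δᵢ = 0`, so `∑ wᵢ x̃ᵢ ↦ ∑ wᵢ xᵢ` is a well-defined isometry on the affine span of the `x̃ i`.
-/

open Set Finset Filter Topology

theorem convexHull_range_eq_image_stdSimplex {ι E : Type*} [Fintype ι] [AddCommGroup E]
    [Module ℝ E] (v : ι → E) :
    convexHull ℝ (range v) = Fintype.linearCombination ℝ v '' stdSimplex ℝ ι := by
  classical
  rw [← convexHull_rangle_single_eq_stdSimplex, LinearMap.image_convexHull, ← range_comp]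
  congr 2
  ext i
  simp

theorem mem_affineSpan_range_iff {ι E : Type*} [Fintype ι] [AddCommGroup E] [Module ℝ E]
    {v : ι → E} {y : E} :
    y ∈ affineSpan ℝ (range v) ↔ ∃ w : ι → ℝ, ∑ i, w i = 1 ∧ ∑ i, w i • v i = y := by
  constructor
  · intro hy
    obtain ⟨w, hw1, rfl⟩ := eq_affineCombination_of_mem_affineSpan_of_fintype hy
    exact ⟨w, hw1, (univ.affineCombination_eq_linear_combination v w hw1).symm⟩
  · rintro ⟨w, hw1, rfl⟩
    rw [← univ.affineCombination_eq_linear_combination v w hw1]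
    exact affineCombination_mem_affineSpan hw1 v

theorem exists_mem_openSegment_of_mem_intrinsicInterior {E : Type*} [NormedAddCommGroup E]
    [NormedSpace ℝ E] {s : Set E} {y z : E} (hy : y ∈ intrinsicInterior ℝ s)
    (hz : z ∈ affineSpan ℝ s) : ∃ y' ∈ s, y ∈ openSegment ℝ z y' := by
  obtain ⟨y₀, hy₀, rfl⟩ := hy
  let g : ℝ → affineSpan ℝ s := fun t =>
    ⟨t • ((y₀ : E) - z) + y₀, AffineSubspace.smul_vsub_vadd_mem _ t y₀.2 hz y₀.2⟩
  have hg0 : g 0 = y₀ := by ext; simp [g]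
  have hnear : ∀ᶠ t in 𝓝 0, (g t : E) ∈ s :=
    ((show Continuous g by fun_prop).continuousAt.eventually_mem
      (hg0 ▸ isOpen_interior.mem_nhds hy₀)).mono
      fun _ h => interior_subset (s := ((↑) ⁻¹' s : Set (affineSpan ℝ s))) h
  obtain ⟨t, hts, ht⟩ :=
    ((hnear.filter_mono nhdsWithin_le_nhds).and (self_mem_nhdsWithin (s := Ioi 0))).exists
  refine ⟨g t, hts, t / (1 + t), 1 / (1 + t), by positivity, by positivity,
    by field_simp; ring, ?_⟩
  have : 1 + t ≠ 0 := by positivity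
  simp only [g, smul_add, smul_smul, smul_sub]
  match_scalars <;> field_simp <;> ring

theorem exists_pos_weights_of_mem_intrinsicInterior_convexHull {ι E : Type*} [Fintype ι]
    [NormedAddCommGroup E] [NormedSpace ℝ E] {v : ι → E} {y : E}
    (hy : y ∈ intrinsicInterior ℝ (convexHull ℝ (range v))) :
    ∃ w : ι → ℝ, (∀ i, 0 < w i) ∧ ∑ i, w i = 1 ∧ ∑ i, w i • v i = y := by
  have : Nonempty ι :=
    range_nonempty_iff_nonempty.1 (convexHull_nonempty_iff.1 ⟨y, intrinsicInterior_subset hy⟩)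
  set L := Fintype.linearCombination ℝ v
  set c : ι → ℝ := fun _ => (Fintype.card ι : ℝ)⁻¹
  have hc : c ∈ stdSimplex ℝ ι := ⟨fun _ => by positivity, by simp [c]⟩
  have hLc : L c ∈ convexHull ℝ (range v) :=
    convexHull_range_eq_image_stdSimplex v ▸ mem_image_of_mem L hc
  -- `y` lies strictly between the centroid `L c` and some point `L ν` of the hull
  obtain ⟨y', hy', a, b, ha, hb, hab, rfl⟩ :=
    exists_mem_openSegment_of_mem_intrinsicInterior hy (subset_affineSpan ℝ _ hLc)
  rw [convexHull_range_eq_image_stdSimplex] at hy'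
  obtain ⟨ν, hν, rfl⟩ := hy'
  refine ⟨a • c + b • ν, fun i => ?_, (convex_stdSimplex ℝ ι hc hν ha.le hb.le hab).2, ?_⟩
  · exact add_pos_of_pos_of_nonneg (mul_pos ha (by positivity)) (mul_nonneg hb.le (hν.1 i))
  · rw [← Fintype.linearCombination_apply, map_add, map_smul, map_smul]

theorem eq_of_le_of_sum_mul_eq {ι : Type*} [Fintype ι] {w f g : ι → ℝ} (hw : ∀ i, 0 < w i)
    (hfg : ∀ i, f i ≤ g i) (h : ∑ i, w i * f i = ∑ i, w i * g i) (i : ι) : f i = g i :=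
  mul_left_cancel₀ (hw i).ne' <|
    (sum_eq_sum_iff_of_le fun i _ => mul_le_mul_of_nonneg_left (hfg i) (hw i).le).1 h i
      (mem_univ i)

section InnerProductSpace

variable {ι E F : Type*} [Fintype ι] [NormedAddCommGroup E] [InnerProductSpace ℝ E]
  [NormedAddCommGroup F] [InnerProductSpace ℝ F]

theorem norm_sum_smul_sq (δ : ι → ℝ) (v : ι → E) :
    ‖∑ i, δ i • v i‖ ^ 2 = ∑ i, ∑ j, δ i * δ j * inner ℝ (v i) (v j) := by
  simp only [← real_inner_self_eq_norm_sq, sum_inner, inner_sum, real_inner_smul_left,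
    real_inner_smul_right]
  refine sum_congr rfl fun i _ => sum_congr rfl fun j _ => ?_
  rw [real_inner_comm]
  ring

theorem sum_sum_mul_norm_sub_sq (δ : ι → ℝ) (v : ι → E) :
    ∑ i, ∑ j, δ i * δ j * ‖v i - v j‖ ^ 2 =
      2 * (∑ i, δ i) * ∑ i, δ i * ‖v i‖ ^ 2 - 2 * ‖∑ i, δ i • v i‖ ^ 2 := by
  have hright : ∑ i, ∑ j, δ i * δ j * ‖v j‖ ^ 2 = (∑ i, δ i) * ∑ i, δ i * ‖v i‖ ^ 2 := by
    simp only [sum_mul_sum, mul_assoc]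
  have hleft : ∑ i, ∑ j, δ i * δ j * ‖v i‖ ^ 2 = (∑ i, δ i) * ∑ i, δ i * ‖v i‖ ^ 2 := by
    rw [← hright, sum_comm]
    exact sum_congr rfl fun i _ => sum_congr rfl fun j _ => by ring
  simp only [norm_sub_sq_real, mul_add, mul_sub, sum_add_distrib, sum_sub_distrib, hleft, hright,
    norm_sum_smul_sq, ← Finset.mul_sum, mul_left_comm _ (2 : ℝ)]
  ring

theorem sum_sum_mul_dist_sq {w : ι → ℝ} (hw : ∑ i, w i = 1) (v : ι → E) (q : E) :
    ∑ i, ∑ j, w i * w j * dist (v i) (v j) ^ 2 =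
      2 * ∑ i, w i * dist q (v i) ^ 2 - 2 * dist q (∑ i, w i • v i) ^ 2 := by
  have hsum : ∑ i, w i • (v i - q) = ∑ i, w i • v i - q := by
    simp [smul_sub, sum_sub_distrib, ← Finset.sum_smul, hw]
  simp only [dist_comm q, dist_eq_norm]
  simpa [hw, hsum] using sum_sum_mul_norm_sub_sq w (v · - q)

theorem norm_sum_smul_sq_of_sum_eq_zero {δ : ι → ℝ} (hδ : ∑ i, δ i = 0) (v : ι → E) :
    ‖∑ i, δ i • v i‖ ^ 2 = -(∑ i, ∑ j, δ i * δ j * dist (v i) (v j) ^ 2) / 2 := by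
  simp only [dist_eq_norm, sum_sum_mul_norm_sub_sq, hδ]
  ring

theorem dist_sum_smul_eq_of_dist_eq {u : ι → F} {v : ι → E}
    (h : ∀ i j, dist (v i) (v j) = dist (u i) (u j)) {w w' : ι → ℝ} (hw : ∑ i, w i = 1)
    (hw' : ∑ i, w' i = 1) :
    dist (∑ i, w i • v i) (∑ i, w' i • v i) = dist (∑ i, w i • u i) (∑ i, w' i • u i) := by
  have hδ : ∑ i, (w i - w' i) = 0 := by rw [sum_sub_distrib, hw, hw', sub_self]
  simp only [dist_eq_norm, ← sum_sub_distrib, ← sub_smul]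
  rw [← sq_eq_sq₀ (norm_nonneg _) (norm_nonneg _), norm_sum_smul_sq_of_sum_eq_zero hδ,
    norm_sum_smul_sq_of_sum_eq_zero hδ]
  simp only [h]

theorem exists_dist_eq_on_affineSpan (u : ι → F) (v : ι → E)
    (h : ∀ i j, dist (v i) (v j) = dist (u i) (u j)) :
    ∃ f : F → E,
      (∀ y ∈ affineSpan ℝ (range u), ∀ z ∈ affineSpan ℝ (range u), dist (f y) (f z) = dist y z) ∧
      ∀ w : ι → ℝ, ∑ i, w i = 1 → f (∑ i, w i • u i) = ∑ i, w i • v i := by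
  choose! W hW1 hWu using fun y (hy : y ∈ affineSpan ℝ (range u)) => mem_affineSpan_range_iff.1 hy
  refine ⟨fun y => ∑ i, W y i • v i, fun y hy z hz => ?_, fun w hw => ?_⟩
  · rw [dist_sum_smul_eq_of_dist_eq h (hW1 y hy) (hW1 z hz), hWu y hy, hWu z hz]
  · have hy := (mem_affineSpan_range_iff (v := u)).2 ⟨w, hw, rfl⟩
    rw [← dist_eq_zero, dist_sum_smul_eq_of_dist_eq h (hW1 _ hy) hw, hWu _ hy, dist_self]

theorem dist_eq_of_pos_weights_of_le {w : ι → ℝ} (hw : ∀ i, 0 < w i) (hw1 : ∑ i, w i = 1)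
    {q : F} {u : ι → F} (hq : ∑ i, w i • u i = q) {p : E} {v : ι → E}
    (hleg : ∀ i, dist p (v i) ≤ dist q (u i)) (hside : ∀ i j, dist (u i) (u j) ≤ dist (v i) (v j)) :
    (∀ i, dist q (u i) = dist p (v i)) ∧ (∀ i j, dist (u i) (u j) = dist (v i) (v j)) ∧
      ∑ i, w i • v i = p := by
  have hU := sum_sum_mul_dist_sq hw1 u q
  have hV := sum_sum_mul_dist_sq hw1 v p
  rw [hq, dist_self] at hU
  have hleg_sq i : dist p (v i) ^ 2 ≤ dist q (u i) ^ 2 := by gcongr; exact hleg i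
  have hside_sq (ij : ι × ι) : dist (u ij.1) (u ij.2) ^ 2 ≤ dist (v ij.1) (v ij.2) ^ 2 := by
    gcongr; exact hside ij.1 ij.2
  have hww (ij : ι × ι) : 0 < w ij.1 * w ij.2 := mul_pos (hw ij.1) (hw ij.2)
  simp only [← Fintype.sum_prod_type' fun i j => w i * w j * _] at hU hV
  have hlegs := sum_le_sum (s := univ) fun i _ =>
    mul_le_mul_of_nonneg_left (hleg_sq i) (hw i).le
  have hsides := sum_le_sum (s := univ) fun ij _ =>
    mul_le_mul_of_nonneg_left (hside_sq ij) (hww ij).le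
  have hp : dist p (∑ i, w i • v i) ^ 2 = 0 := by
    nlinarith [sq_nonneg (dist p (∑ i, w i • v i))]
  refine ⟨fun i => ?_, fun i j => ?_, (dist_eq_zero.1 (pow_eq_zero_iff two_ne_zero |>.1 hp)).symm⟩
  · exact ((sq_eq_sq₀ dist_nonneg dist_nonneg).1
      (eq_of_le_of_sum_mul_eq hw hleg_sq (by linarith) i)).symm
  · exact (sq_eq_sq₀ dist_nonneg dist_nonneg).1
      (eq_of_le_of_sum_mul_eq hww hside_sq (by linarith) (i, j))

end InnerProductSpace

theorem kirszbraun_rigidity_euclidean_general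
    {m n : ℕ} {F : Type*} [NormedAddCommGroup F] [InnerProductSpace ℝ F]
    (p : EuclideanSpace ℝ (Fin m)) (x : Fin n → EuclideanSpace ℝ (Fin m))
    (qt : F) (xt : Fin n → F)
    (h1 : ∀ i, dist p (x i) ≤ dist qt (xt i))
    (h2 : ∀ i j, dist (xt i) (xt j) ≤ dist (x i) (x j))
    (h3 : qt ∈ intrinsicInterior ℝ (convexHull ℝ (Set.range xt))) :
    (∀ i, dist qt (xt i) = dist p (x i)) ∧
    (∀ i j, dist (xt i) (xt j) = dist (x i) (x j)) ∧
    ∃ f : F → EuclideanSpace ℝ (Fin m),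
      (∀ y ∈ convexHull ℝ (Set.range xt), ∀ z ∈ convexHull ℝ (Set.range xt),
        dist (f y) (f z) = dist y z) ∧
      (∀ i, f (xt i) = x i) ∧ f qt = p := by
  obtain ⟨w, hw, hw1, hq⟩ := exists_pos_weights_of_mem_intrinsicInterior_convexHull h3
  obtain ⟨hleg, hside, hp⟩ := dist_eq_of_pos_weights_of_le hw hw1 hq h1 h2
  obtain ⟨f, hf, hf_comb⟩ := exists_dist_eq_on_affineSpan xt x fun i j => (hside i j).symm
  refine ⟨hleg, hside, f, fun y hy z hz => hf y (convexHull_subset_affineSpan _ hy) z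
    (convexHull_subset_affineSpan _ hz), fun i => ?_, ?_⟩
  · simpa using hf_comb (Pi.single i 1) (by simp)
  · rw [← hq, hf_comb w hw1, hp]

/-- Kirszbraun rigidity, Euclidean case: if a configuration in a Hilbert space `F` has
longer legs from a point `q̃` in the intrinsic interior of the convex hull of the `x̃ i`
and shorter mutual distances than the configuration `p, x` in Euclidean space, then all
distances agree, and the model configuration maps back isometrically. -/
theorem kirszbraun_rigidity_euclidean
    {m n : ℕ} {F : Type*} [NormedAddCommGroup F] [InnerProductSpace ℝ F] [CompleteSpace F]
    (p : EuclideanSpace ℝ (Fin m)) (x : Fin n → EuclideanSpace ℝ (Fin m))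
    (qt : F) (xt : Fin n → F)
    (h1 : ∀ i, dist p (x i) ≤ dist qt (xt i))
    (h2 : ∀ i j, dist (xt i) (xt j) ≤ dist (x i) (x j))
    (h3 : qt ∈ intrinsicInterior ℝ (convexHull ℝ (Set.range xt))) :
    (∀ i, dist qt (xt i) = dist p (x i)) ∧
    (∀ i j, dist (xt i) (xt j) = dist (x i) (x j)) ∧
    ∃ f : F → EuclideanSpace ℝ (Fin m),
      (∀ y ∈ convexHull ℝ (Set.range xt), ∀ z ∈ convexHull ℝ (Set.range xt),
        dist (f y) (f z) = dist y z) ∧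
      (∀ i, f (xt i) = x i) ∧ f qt = p :=
  kirszbraun_rigidity_euclidean_general p x qt xt h1 h2 h3
end

section
/- Let E be a real inner product space, s ⊆ E a convex set, q ∈ s, and f : E → ℝ. Assume that the function v ↦ f v − ½‖v‖² is concave on s, that f q = 0, and that f has Fréchet derivative 0 at q within s (HasFDerivWithinAt f 0 s q). Then f v ≤ ½‖v − q‖² for every v ∈ s. -/
/-! The function `f - ½‖·‖²` is concave, so it lies below its tangent hyperplane at `q`, which by
`f q = 0` and `f' q = 0` is `v ↦ -½‖q‖² - ⟪q, v - q⟫`; adding `½‖v‖²` turns this bound into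
`½‖v - q‖²`. -/

open AffineMap

theorem ConcaveOn.le_add_of_hasFDerivWithinAt {E : Type*} [NormedAddCommGroup E]
    [NormedSpace ℝ E] {s : Set E} {g : E → ℝ} {g' : E →L[ℝ] ℝ} {x y : E}
    (hg : ConcaveOn ℝ s g) (hx : x ∈ s) (hy : y ∈ s) (hg' : HasFDerivWithinAt g g' s x) :
    g y ≤ g x + g' (y - x) := by
  -- Along the segment from `y` to `x`, the derivative at the endpoint `x` is at most the slope.
  set L : ℝ →ᵃ[ℝ] E := lineMap y x
  have hφ : HasDerivWithinAt (g ∘ L) (g' (x - y)) (L ⁻¹' s) 1 := by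
    refine HasFDerivWithinAt.comp_hasDerivWithinAt (x := (1 : ℝ)) ?_ hasDerivWithinAt_lineMap
      fun _ ht ↦ ht
    rwa [lineMap_apply_one]
  have hslope := (hg.comp_affineMap L).le_slope_of_hasDerivWithinAt
    (by simpa [L] using hy) (by simpa [L] using hx) one_pos hφ
  rw [slope_def_field] at hslope
  simp only [L, Function.comp_apply, lineMap_apply_one, lineMap_apply_zero, sub_zero,
    div_one] at hslope
  rw [← neg_sub x y, map_neg]
  linarith

theorem hasFDerivAt_norm_sq_div_two {E : Type*} [NormedAddCommGroup E] [InnerProductSpace ℝ E]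
    (x : E) : HasFDerivAt (fun v : E ↦ ‖v‖ ^ 2 / 2) (innerSL ℝ x) x := by
  have h := (hasStrictFDerivAt_norm_sq x).hasFDerivAt.mul_const (2⁻¹ : ℝ)
  simp only [← div_eq_mul_inv] at h
  refine h.congr_fderiv ?_
  ext v
  simp

theorem le_paraboloid_of_concave_general
    {E : Type*} [NormedAddCommGroup E] [InnerProductSpace ℝ E]
    {s : Set E} {q : E} (hq : q ∈ s) (f : E → ℝ)
    (hconc : ConcaveOn ℝ s (fun v => f v - ‖v‖ ^ 2 / 2))
    (hfq : f q = 0) (hderiv : HasFDerivWithinAt f (0 : E →L[ℝ] ℝ) s q) :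
    ∀ v ∈ s, f v ≤ ‖v - q‖ ^ 2 / 2 := by
  intro v hv
  have htangent := hconc.le_add_of_hasFDerivWithinAt hq hv
    (hderiv.sub (hasFDerivAt_norm_sq_div_two q).hasFDerivWithinAt)
  simp only [hfq, sub_apply, zero_apply, innerSL_apply_apply, inner_sub_right,
    real_inner_self_eq_norm_sq] at htangent
  linarith [norm_sub_sq_real v q, real_inner_comm v q]

/-- If `v ↦ f v − ½‖v‖²` is concave on a convex set `s` (the condition `f'' ≤ 1`), and `f`
vanishes together with its derivative (within `s`) at a point `q ∈ s`, then `f` is bounded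
above on `s` by the model paraboloid `v ↦ ½‖v − q‖²`. -/
theorem le_paraboloid_of_concave
    {E : Type*} [NormedAddCommGroup E] [InnerProductSpace ℝ E]
    {s : Set E} (hs : Convex ℝ s) {q : E} (hq : q ∈ s) (f : E → ℝ)
    (hconc : ConcaveOn ℝ s (fun v => f v - ‖v‖ ^ 2 / 2))
    (hfq : f q = 0) (hderiv : HasFDerivWithinAt f (0 : E →L[ℝ] ℝ) s q) :
    ∀ v ∈ s, f v ≤ ‖v - q‖ ^ 2 / 2 :=
  le_paraboloid_of_concave_general hq f hconc hfq hderiv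
end
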